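/- The operator E = Σ_{k=1}^p (z_{2k-1} ∂_{z̄_{2k}} - z_{2k} ∂_{z̄_{2k-1}}) satisfies [E, ∂_z] = -∂_z†^J, [E, ∂_z†] = 0, [E, ∂_z^J] = ∂_z† and [E, ∂_z†^J] = 0; consequently, if F is annihilated by all four operators ∂_z, ∂_z†, ∂_z^J, ∂_z†^J, then so is EF. -/

import Mathlib

open MvPolynomial TensorProduct

/-- Variables: `Sum.inl j` is `z_{j+1}`, `Sum.inr j` is `z̄_{j+1}` (0-indexed). -/
abbrev HVar (p : ℕ) := Fin (2*p) ⊕ Fin (2*p)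

abbrev HPol (p : ℕ) := MvPolynomial (HVar p) ℂ

def idx0 {p : ℕ} (k : Fin p) : Fin (2*p) := ⟨2*k.1, by have := k.2; omega⟩
def idx1 {p : ℕ} (k : Fin p) : Fin (2*p) := ⟨2*k.1+1, by have := k.2; omega⟩

variable (p : ℕ) (A : Type*) [Ring A] [Algebra ℂ A]

/-- The (Wirtinger) partial derivative `∂_v`, acting on `A`-valued polynomials. -/
noncomputable def Dop (v : HVar p) : Module.End ℂ (HPol p ⊗[ℂ] A) :=
  LinearMap.rTensor A (MvPolynomial.pderiv v).toLinearMap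

/-- Left Clifford multiplication by `a : A` on `A`-valued polynomials. -/
noncomputable def mulF (a : A) : Module.End ℂ (HPol p ⊗[ℂ] A) :=
  LinearMap.lTensor (HPol p) (LinearMap.mulLeft ℂ a)

/-- Multiplication by the scalar polynomial `q` on `A`-valued polynomials. -/
noncomputable def mulP (q : HPol p) : Module.End ℂ (HPol p ⊗[ℂ] A) :=
  LinearMap.rTensor A (LinearMap.mulLeft ℂ q)

/-- The hermitian Dirac operator `∂_z = Σ_k f_k† ∂_{z_k}`. -/
noncomputable def dz (fd : Fin (2*p) → A) : Module.End ℂ (HPol p ⊗[ℂ] A) :=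
  ∑ k : Fin (2*p), mulF p A (fd k) * Dop p A (Sum.inl k)

/-- The hermitian Dirac operator `∂_z† = Σ_k f_k ∂_{z̄_k}`. -/
noncomputable def dzd (f : Fin (2*p) → A) : Module.End ℂ (HPol p ⊗[ℂ] A) :=
  ∑ k : Fin (2*p), mulF p A (f k) * Dop p A (Sum.inr k)

/-- The rotated Dirac operator `∂_z^J = Σ_j (∂_{z_{2j}} f_{2j-1} - ∂_{z_{2j-1}} f_{2j})`. -/
noncomputable def dzJ (f : Fin (2*p) → A) : Module.End ℂ (HPol p ⊗[ℂ] A) :=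
  ∑ j : Fin p, (mulF p A (f (idx0 j)) * Dop p A (Sum.inl (idx1 j))
    - mulF p A (f (idx1 j)) * Dop p A (Sum.inl (idx0 j)))

/-- The rotated Dirac operator `∂_z†^J = Σ_j (∂_{z̄_{2j}} f†_{2j-1} - ∂_{z̄_{2j-1}} f†_{2j})`. -/
noncomputable def dzdJ (fd : Fin (2*p) → A) : Module.End ℂ (HPol p ⊗[ℂ] A) :=
  ∑ j : Fin p, (mulF p A (fd (idx0 j)) * Dop p A (Sum.inr (idx1 j))
    - mulF p A (fd (idx1 j)) * Dop p A (Sum.inr (idx0 j)))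

/-- The scalar operator `E = Σ_j (z_{2j-1} ∂_{z̄_{2j}} - z_{2j} ∂_{z̄_{2j-1}})`. -/
noncomputable def Eop : Module.End ℂ (HPol p ⊗[ℂ] A) :=
  ∑ j : Fin p, (mulP p A (X (Sum.inl (idx0 j))) * Dop p A (Sum.inr (idx1 j))
    - mulP p A (X (Sum.inl (idx1 j))) * Dop p A (Sum.inr (idx0 j)))
/-! `E` only involves the operators `z_k` and `∂_v`, and these realise the canonical commutation
relations `[∂_v, z_k] = δ_{v, z_k}`, `[∂_v, ∂_w] = 0`; the Clifford coefficients commute with all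
of them. Hence `[z_k ∂_b, c ∂_d] = -δ_{d, z_k} c ∂_b`, so `E` commutes with `c ∂_{z̄_k}` and sends
`c ∂_{z_{2j-1}}, c ∂_{z_{2j}}` to `-c ∂_{z̄_{2j}}, c ∂_{z̄_{2j-1}}`; summing gives the four
commutators. Finally, if `[E, T] = S` and `T F = S F = 0`, then `T (E F) = E (T F) - S F = 0`. -/

theorem MvPolynomial.pderiv_pderiv_comm {R σ : Type*} [CommRing R] (i j : σ)
    (f : MvPolynomial σ R) : pderiv i (pderiv j f) = pderiv j (pderiv i f) := by
  classical
  have h : ⁅pderiv i, pderiv j⁆ = (0 : Derivation R (MvPolynomial σ R) (MvPolynomial σ R)) :=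
    derivation_ext fun k => by
      rw [Derivation.commutator_apply]
      simp [pderiv_X, Pi.single_apply, apply_ite]
  exact sub_eq_zero.mp congr($h f)

theorem MvPolynomial.pderiv_mul_mulLeft_X_sub {R σ : Type*} [CommRing R] [DecidableEq σ]
    (i j : σ) :
    (pderiv i).toLinearMap * LinearMap.mulLeft R (X j : MvPolynomial σ R)
      - LinearMap.mulLeft R (X j) * (pderiv i).toLinearMap = if i = j then 1 else 0 := by
  refine LinearMap.ext fun f => ?_
  split_ifs with hij <;> simp [pderiv_X, hij]

section Indices

variable {p : ℕ}

@[simp] theorem idx0_inj {j k : Fin p} : idx0 j = idx0 k ↔ j = k := by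
  simp only [idx0, Fin.ext_iff]; omega

@[simp] theorem idx1_inj {j k : Fin p} : idx1 j = idx1 k ↔ j = k := by
  simp only [idx1, Fin.ext_iff]; omega

@[simp] theorem idx0_ne_idx1 (j k : Fin p) : idx0 j ≠ idx1 k := by
  simp only [idx0, idx1, ne_eq, Fin.mk.injEq]; omega

@[simp] theorem idx1_ne_idx0 (j k : Fin p) : idx1 j ≠ idx0 k := (idx0_ne_idx1 k j).symm

theorem sum_eq_sum_idx0_add_idx1 {M : Type*} [AddCommMonoid M] (g : Fin (2*p) → M) :
    ∑ k, g k = ∑ j : Fin p, (g (idx0 j) + g (idx1 j)) := by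
  let e : Fin p × Fin 2 ≃ Fin (2*p) := finProdFinEquiv.trans (finCongr (mul_comm p 2))
  rw [← e.sum_comp, Fintype.sum_prod_type]
  refine Finset.sum_congr rfl fun j _ => ?_
  rw [Fin.sum_univ_two]
  congr 2 <;> ext <;> simp [e, idx0, idx1]; omega

end Indices

/-! The commutator algebra is stated for `Module.End R M` over an arbitrary module rather than
in an arbitrary ring: on `HPol p ⊗[ℂ] A`, the ring structure of `Module.End` does not reducibly
match the additive structure `Dop`, `mulP`, `mulF` are built with, so general ring lemmas fail
to rewrite there, while these instantiate cleanly. -/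

section CanonicalCommutation

variable {R M : Type*} [Semiring R] [AddCommGroup M] [Module R M]

theorem commutator_mul_mul {z d c d' : Module.End R M} (hcz : Commute c z) (hcd : Commute c d)
    (hdd : Commute d d') :
    z * d * (c * d') - c * d' * (z * d) = -(c * (d' * z - z * d') * d) := by
  have h : z * d * (c * d') = c * z * d' * d := by
    rw [mul_assoc, ← mul_assoc d, ← hcd.eq, ← mul_assoc, ← mul_assoc, ← hcz.eq, mul_assoc,
      hdd.eq, ← mul_assoc]
  rw [h]; noncomm_ring

theorem commutator_sub_left (x y e : Module.End R M) :
    (x - y) * e - e * (x - y) = (x * e - e * x) - (y * e - e * y) := by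
  noncomm_ring

theorem commutator_sub_right (e x y : Module.End R M) :
    e * (x - y) - (x - y) * e = (e * x - x * e) - (e * y - y * e) := by
  noncomm_ring

theorem commutator_sum_left {ι : Type*} (s : Finset ι) (a : ι → Module.End R M)
    (e : Module.End R M) :
    (∑ i ∈ s, a i) * e - e * ∑ i ∈ s, a i = ∑ i ∈ s, (a i * e - e * a i) := by
  rw [Finset.mul_sum, Finset.sum_mul, Finset.sum_sub_distrib]

theorem commutator_sum_right {ι : Type*} (s : Finset ι) (e : Module.End R M)
    (b : ι → Module.End R M) :
    e * ∑ i ∈ s, b i - (∑ i ∈ s, b i) * e = ∑ i ∈ s, (e * b i - b i * e) := by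
  rw [Finset.mul_sum, Finset.sum_mul, Finset.sum_sub_distrib]

theorem Module.End.apply_apply_eq_zero_of_commutator_eq {e t s : Module.End R M}
    (h : e * t - t * e = s) {x : M} (ht : t x = 0) (hs : s x = 0) : t (e x) = 0 := by
  have hte : t * e = e * t - s := by rw [← h]; abel
  simpa [ht, hs] using congr($hte x)

variable {p : ℕ}

/-- `Z k` plays the multiplication by `z_k`, `D v` the partial derivative `∂_v`. -/
structure IsCCR (Z : Fin (2*p) → Module.End R M) (D : HVar p → Module.End R M) : Prop where
  commute_D : ∀ v w, Commute (D v) (D w)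
  D_mul_Z_sub : ∀ v k, D v * Z k - Z k * D v = if v = Sum.inl k then 1 else 0

/-- `Eop p A` is definitionally `rotE (fun k => mulP p A (X (Sum.inl k))) (Dop p A)`. -/
def rotE (Z : Fin (2*p) → Module.End R M) (D : HVar p → Module.End R M) : Module.End R M :=
  ∑ j : Fin p, (Z (idx0 j) * D (Sum.inr (idx1 j)) - Z (idx1 j) * D (Sum.inr (idx0 j)))

namespace IsCCR

variable {Z : Fin (2*p) → Module.End R M} {D : HVar p → Module.End R M}

section SingleTerm

variable {c : Module.End R M}

theorem commutator_Z_mul_D (h : IsCCR Z D) (hcZ : ∀ k, Commute c (Z k))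
    (hcD : ∀ v, Commute c (D v)) (k : Fin (2*p)) (b d : HVar p) :
    Z k * D b * (c * D d) - c * D d * (Z k * D b) = if d = Sum.inl k then -(c * D b) else 0 := by
  rw [commutator_mul_mul (hcZ k) (hcD b) (h.commute_D b d), h.D_mul_Z_sub]
  split_ifs <;> simp

theorem commutator_rotE_mul_D_inr (h : IsCCR Z D) (hcZ : ∀ k, Commute c (Z k))
    (hcD : ∀ v, Commute c (D v)) (k : Fin (2*p)) :
    rotE Z D * (c * D (Sum.inr k)) - c * D (Sum.inr k) * rotE Z D = 0 := by
  rw [rotE, commutator_sum_left]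
  simp [commutator_sub_left, h.commutator_Z_mul_D hcZ hcD]

theorem commutator_rotE_mul_D_inl_idx0 (h : IsCCR Z D) (hcZ : ∀ k, Commute c (Z k))
    (hcD : ∀ v, Commute c (D v)) (j : Fin p) :
    rotE Z D * (c * D (Sum.inl (idx0 j))) - c * D (Sum.inl (idx0 j)) * rotE Z D
      = -(c * D (Sum.inr (idx1 j))) := by
  rw [rotE, commutator_sum_left]
  simp [commutator_sub_left, h.commutator_Z_mul_D hcZ hcD]

theorem commutator_rotE_mul_D_inl_idx1 (h : IsCCR Z D) (hcZ : ∀ k, Commute c (Z k))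
    (hcD : ∀ v, Commute c (D v)) (j : Fin p) :
    rotE Z D * (c * D (Sum.inl (idx1 j))) - c * D (Sum.inl (idx1 j)) * rotE Z D
      = c * D (Sum.inr (idx0 j)) := by
  rw [rotE, commutator_sum_left]
  simp [commutator_sub_left, h.commutator_Z_mul_D hcZ hcD]

end SingleTerm

variable {a : Fin (2*p) → Module.End R M}

theorem commutator_rotE_dz (h : IsCCR Z D) (haZ : ∀ i k, Commute (a i) (Z k))
    (haD : ∀ i v, Commute (a i) (D v)) :
    rotE Z D * ∑ k, a k * D (Sum.inl k) - (∑ k, a k * D (Sum.inl k)) * rotE Z D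
      = -∑ j, (a (idx0 j) * D (Sum.inr (idx1 j)) - a (idx1 j) * D (Sum.inr (idx0 j))) := by
  rw [commutator_sum_right, sum_eq_sum_idx0_add_idx1, ← Finset.sum_neg_distrib]
  refine Finset.sum_congr rfl fun j _ => ?_
  rw [h.commutator_rotE_mul_D_inl_idx0 (haZ _) (haD _),
    h.commutator_rotE_mul_D_inl_idx1 (haZ _) (haD _)]
  abel

theorem commutator_rotE_dzd (h : IsCCR Z D) (haZ : ∀ i k, Commute (a i) (Z k))
    (haD : ∀ i v, Commute (a i) (D v)) :
    rotE Z D * ∑ k, a k * D (Sum.inr k) - (∑ k, a k * D (Sum.inr k)) * rotE Z D = 0 := by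
  rw [commutator_sum_right]
  exact Finset.sum_eq_zero fun k _ => h.commutator_rotE_mul_D_inr (haZ k) (haD k) k

theorem commutator_rotE_dzJ (h : IsCCR Z D) (haZ : ∀ i k, Commute (a i) (Z k))
    (haD : ∀ i v, Commute (a i) (D v)) :
    rotE Z D * ∑ j, (a (idx0 j) * D (Sum.inl (idx1 j)) - a (idx1 j) * D (Sum.inl (idx0 j)))
      - (∑ j, (a (idx0 j) * D (Sum.inl (idx1 j)) - a (idx1 j) * D (Sum.inl (idx0 j))))
        * rotE Z D
      = ∑ k, a k * D (Sum.inr k) := by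
  rw [commutator_sum_right, sum_eq_sum_idx0_add_idx1]
  refine Finset.sum_congr rfl fun j _ => ?_
  rw [commutator_sub_right, h.commutator_rotE_mul_D_inl_idx1 (haZ _) (haD _),
    h.commutator_rotE_mul_D_inl_idx0 (haZ _) (haD _), sub_neg_eq_add]

theorem commutator_rotE_dzdJ (h : IsCCR Z D) (haZ : ∀ i k, Commute (a i) (Z k))
    (haD : ∀ i v, Commute (a i) (D v)) :
    rotE Z D * ∑ j, (a (idx0 j) * D (Sum.inr (idx1 j)) - a (idx1 j) * D (Sum.inr (idx0 j)))
      - (∑ j, (a (idx0 j) * D (Sum.inr (idx1 j)) - a (idx1 j) * D (Sum.inr (idx0 j))))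
        * rotE Z D = 0 := by
  rw [commutator_sum_right]
  refine Finset.sum_eq_zero fun j _ => ?_
  rw [commutator_sub_right, h.commutator_rotE_mul_D_inr (haZ _) (haD _),
    h.commutator_rotE_mul_D_inr (haZ _) (haD _), sub_zero]

end IsCCR

end CanonicalCommutation

section Operators

variable {p A}

theorem commute_mulF_rTensor (a : A) (g : Module.End ℂ (HPol p)) :
    Commute (mulF p A a) (LinearMap.rTensor A g) := by
  rw [Commute, SemiconjBy, mulF, Module.End.mul_eq_comp, Module.End.mul_eq_comp,
    LinearMap.lTensor_comp_rTensor, LinearMap.rTensor_comp_lTensor]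

theorem commute_mulF_Dop (a : A) (v : HVar p) : Commute (mulF p A a) (Dop p A v) :=
  commute_mulF_rTensor a _

theorem commute_mulF_mulP (a : A) (q : HPol p) : Commute (mulF p A a) (mulP p A q) :=
  commute_mulF_rTensor a _

theorem commute_Dop_Dop (v w : HVar p) : Commute (Dop p A v) (Dop p A w) := by
  unfold Dop
  rw [Commute, SemiconjBy, ← LinearMap.rTensor_mul, ← LinearMap.rTensor_mul]
  exact congrArg (LinearMap.rTensor A) (LinearMap.ext fun f => pderiv_pderiv_comm v w f)

theorem Dop_mul_mulP_X_sub (v w : HVar p) :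
    Dop p A v * mulP p A (X w) - mulP p A (X w) * Dop p A v = if v = w then 1 else 0 := by
  unfold Dop mulP
  rw [← LinearMap.rTensor_mul, ← LinearMap.rTensor_mul, ← LinearMap.rTensor_sub,
    pderiv_mul_mulLeft_X_sub]
  split_ifs
  · exact LinearMap.rTensor_id A _
  · exact LinearMap.rTensor_zero A

theorem isCCR_Dop : IsCCR (fun k => mulP p A (X (Sum.inl k))) (Dop p A) where
  commute_D := commute_Dop_Dop
  D_mul_Z_sub v k := Dop_mul_mulP_X_sub v (Sum.inl k)

end Operators

theorem E_dirac_commutators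
    (f fd : Fin (2*p) → A) :
    Eop p A * dz p A fd - dz p A fd * Eop p A = -(dzdJ p A fd) ∧
    Eop p A * dzd p A f - dzd p A f * Eop p A = 0 ∧
    Eop p A * dzJ p A f - dzJ p A f * Eop p A = dzd p A f ∧
    Eop p A * dzdJ p A fd - dzdJ p A fd * Eop p A = 0 ∧
    (∀ F : HPol p ⊗[ℂ] A, dz p A fd F = 0 → dzd p A f F = 0 → dzJ p A f F = 0 →
      dzdJ p A fd F = 0 →
      dz p A fd (Eop p A F) = 0 ∧ dzd p A f (Eop p A F) = 0 ∧
      dzJ p A f (Eop p A F) = 0 ∧ dzdJ p A fd (Eop p A F) = 0) := by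
  have hZ (c : Fin (2*p) → A) : ∀ i k, Commute (mulF p A (c i)) (mulP p A (X (Sum.inl k))) :=
    fun i _ => commute_mulF_mulP (c i) _
  have hD (c : Fin (2*p) → A) : ∀ i v, Commute (mulF p A (c i)) (Dop p A v) :=
    fun i v => commute_mulF_Dop (c i) v
  have h1 : Eop p A * dz p A fd - dz p A fd * Eop p A = -(dzdJ p A fd) :=
    isCCR_Dop.commutator_rotE_dz (a := fun i => mulF p A (fd i)) (hZ fd) (hD fd)
  have h2 : Eop p A * dzd p A f - dzd p A f * Eop p A = 0 :=
    isCCR_Dop.commutator_rotE_dzd (a := fun i => mulF p A (f i)) (hZ f) (hD f)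
  have h3 : Eop p A * dzJ p A f - dzJ p A f * Eop p A = dzd p A f :=
    isCCR_Dop.commutator_rotE_dzJ (a := fun i => mulF p A (f i)) (hZ f) (hD f)
  have h4 : Eop p A * dzdJ p A fd - dzdJ p A fd * Eop p A = 0 :=
    isCCR_Dop.commutator_rotE_dzdJ (a := fun i => mulF p A (fd i)) (hZ fd) (hD fd)
  refine ⟨h1, h2, h3, h4, fun F hz hzd hzJ hzdJ => ⟨?_, ?_, ?_, ?_⟩⟩
  · exact Module.End.apply_apply_eq_zero_of_commutator_eq h1 hz (by rw [LinearMap.neg_apply, hzdJ, neg_zero])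
  · exact Module.End.apply_apply_eq_zero_of_commutator_eq h2 hzd rfl
  · exact Module.End.apply_apply_eq_zero_of_commutator_eq h3 hzJ hzd
  · exact Module.End.apply_apply_eq_zero_of_commutator_eq h4 hzdJ rfl
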